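/- arXiv:1710.05140 — 4 statements merged into one kernel-verified Lean document; each statement's English description precedes it below -/
import Mathlib

section
/- Let X be a graph, A a finite symmetric set of nonzero reals, and for vertices v, u of X write v ∼ u if N(v) = N(u) (equal open neighbourhoods). Let V′ contain exactly one vertex from each ∼-equivalence class and let X′ be the subgraph of X induced by V′. Then X admits a strict A-embedding in ℝ¹ if and only if X′ admits a strict injective A-embedding in ℝ¹. -/
/-!
A strict embedding sends two vertices to the same point only if they have the same
neighbours, and conversely vertices with the same neighbours may be sent to the same point
without spoiling strictness, because `0 ∉ A`. So restricting a strict embedding of `X` to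
the representatives `V'` is injective, and a strict injective embedding of `X′` extends to
`X` by sending each vertex to the image of its representative.
-/

namespace SimpleGraph

variable {W U : Type*}

def IsStrictEmbedding (G : SimpleGraph W) (A : Set ℝ) (φ : W → ℝ) : Prop :=
  (∀ x y, G.Adj x y → |φ x - φ y| ∈ A) ∧ (∀ x y, x ≠ y → ¬G.Adj x y → |φ x - φ y| ∉ A)

theorem IsStrictEmbedding.comap {H : SimpleGraph U} {A : Set ℝ} {ψ : U → ℝ}
    (hψ : H.IsStrictEmbedding A ψ) (h0 : (0 : ℝ) ∉ A) (f : W → U) :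
    (H.comap f).IsStrictEmbedding A (ψ ∘ f) := by
  refine ⟨fun x y hxy => hψ.1 _ _ hxy, fun x y _ hxy => ?_⟩
  by_cases hf : f x = f y
  · simpa [hf] using h0
  · exact hψ.2 _ _ hf hxy

theorem IsStrictEmbedding.neighborSet_eq_of_apply_eq {G : SimpleGraph W} {A : Set ℝ}
    {φ : W → ℝ} (hφ : G.IsStrictEmbedding A φ) (h0 : (0 : ℝ) ∉ A) {x y : W}
    (hxy : φ x = φ y) : G.neighborSet x = G.neighborSet y := by
  have adj_of_adj {x y : W} (hxy : φ x = φ y) {z : W} (hxz : G.Adj x z) : G.Adj y z := by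
    have hyz : |φ y - φ z| ∈ A := hxy ▸ hφ.1 x z hxz
    by_contra hyz'
    refine hφ.2 y z (fun hy => h0 ?_) hyz' hyz
    simpa [hy] using hyz
  ext z
  exact ⟨adj_of_adj hxy, adj_of_adj hxy.symm⟩

theorem adj_congr_of_neighborSet_eq (G : SimpleGraph W) {x x' y y' : W}
    (hx : G.neighborSet x = G.neighborSet x') (hy : G.neighborSet y = G.neighborSet y') :
    G.Adj x y ↔ G.Adj x' y' := by
  rw [← mem_neighborSet, hx, mem_neighborSet, adj_comm, ← mem_neighborSet, hy,
    mem_neighborSet, adj_comm]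

end SimpleGraph

theorem stmt3_general {V : Type*} (X : SimpleGraph V) (A : Set ℝ) (h0 : (0 : ℝ) ∉ A)
    (V' : Set V)
    (hV' : ∀ v : V, ∃! u, u ∈ V' ∧ X.neighborSet v = X.neighborSet u) :
    -- X admits a strict A-embedding in ℝ¹
    (∃ φ : V → ℝ,
        (∀ x y, X.Adj x y → |φ x - φ y| ∈ A) ∧
        (∀ x y, x ≠ y → ¬X.Adj x y → |φ x - φ y| ∉ A)) ↔
    -- the induced subgraph X′ on V′ admits a strict injective A-embedding in ℝ¹
    (∃ ψ : V' → ℝ, Function.Injective ψ ∧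
        (∀ x y : V', X.Adj x y → |ψ x - ψ y| ∈ A) ∧
        (∀ x y : V', x ≠ y → ¬X.Adj x y → |ψ x - ψ y| ∉ A)) := by
  change (∃ φ, X.IsStrictEmbedding A φ) ↔
    ∃ ψ, Function.Injective ψ ∧ (X.induce V').IsStrictEmbedding A ψ
  constructor
  · rintro ⟨φ, hφ⟩
    refine ⟨φ ∘ Subtype.val, fun x y hxy => ?_, hφ.comap h0 ((↑) : V' → V)⟩
    have hN := hφ.neighborSet_eq_of_apply_eq h0 hxy
    exact Subtype.ext ((hV' x).unique ⟨x.2, rfl⟩ ⟨y.2, hN⟩)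
  · rintro ⟨ψ, -, hψ⟩
    choose r hr using fun v => (hV' v).exists
    have hX : X = (X.induce V').comap (fun v => ⟨r v, (hr v).1⟩) := by
      ext x y
      exact X.adj_congr_of_neighborSet_eq (hr x).2 (hr y).2
    rw [hX]
    exact ⟨_, hψ.comap h0 _⟩

theorem stmt3 {V : Type*} (X : SimpleGraph V) (A : Set ℝ) (hfin : A.Finite)
    (hsym : ∀ a ∈ A, -a ∈ A) (h0 : (0 : ℝ) ∉ A)
    (V' : Set V)
    (hV' : ∀ v : V, ∃! u, u ∈ V' ∧ X.neighborSet v = X.neighborSet u) :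
    -- X admits a strict A-embedding in ℝ¹
    (∃ φ : V → ℝ,
        (∀ x y, X.Adj x y → |φ x - φ y| ∈ A) ∧
        (∀ x y, x ≠ y → ¬X.Adj x y → |φ x - φ y| ∉ A)) ↔
    -- the induced subgraph X′ on V′ admits a strict injective A-embedding in ℝ¹
    (∃ ψ : V' → ℝ, Function.Injective ψ ∧
        (∀ x y : V', X.Adj x y → |ψ x - ψ y| ∈ A) ∧
        (∀ x y : V', x ≠ y → ¬X.Adj x y → |ψ x - ψ y| ∉ A)) :=
  stmt3_general X A h0 V' hV'
end

section
/- Let Γ = Cay(G, A) where G is a free finitely generated abelian group and A a finite symmetric generating set not containing 0. Let B_r be the subgraph of Γ induced on {x ∈ G : ρ(x) ≤ r} where ρ is the word metric. If λ is a subgraph of Γ and φ : B_r → λ is a graph isomorphism, then λ equals the translated ball B_r + φ(0) (as a subgraph). -/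
def cay {k : ℕ} (A : Set (Fin k → ℤ)) : SimpleGraph (Fin k → ℤ) where
  Adj x y := x ≠ y ∧ (y - x ∈ A ∨ x - y ∈ A)
  symm := ⟨fun x y h => ⟨h.1.symm, h.2.symm⟩⟩
  loopless := ⟨fun x h => h.1 rfl⟩

/-- The word metric of `ℤ^k` with respect to `A`: the least number of elements of `A`
summing to `v`. -/
noncomputable def wdist {k : ℕ} (A : Set (Fin k → ℤ)) (v : Fin k → ℤ) : ℕ :=
  sInf {n | ∃ l : List (Fin k → ℤ), l.length = n ∧ (∀ a ∈ l, a ∈ A) ∧ l.sum = v}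

/-!
Normalise `φ` so that it fixes `0`: `u ↦ φ u - φ 0` is an injective graph homomorphism from
`B_r` into `Γ`. Following a geodesic from `0` shows that it does not increase word length, so it
maps the finite ball into itself, injectively and hence bijectively. An injective self-map of a
finite set that preserves a relation also reflects it (it permutes the finitely many related
pairs), so the normalised map is an automorphism of `B_r`, and `λ` is its translate by `φ 0`.
-/

open Function

theorem Function.Injective.rel_of_rel_apply {α : Type*} [Finite α] {e : α → α}
    (he : Injective e) {R : α → α → Prop} (hR : ∀ a b, R a b → R (e a) (e b)) {a b : α}
    (h : R (e a) (e b)) : R a b := by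
  let eR : {p : α × α // R p.1 p.2} → {p : α × α // R p.1 p.2} :=
    fun p => ⟨(e p.1.1, e p.1.2), hR _ _ p.2⟩
  have heR : Injective eR := fun p q hpq => by
    simp only [eR, Subtype.mk.injEq, Prod.mk.injEq] at hpq
    exact Subtype.ext (Prod.ext (he hpq.1) (he hpq.2))
  obtain ⟨⟨⟨a', b'⟩, hab'⟩, hp⟩ := Finite.injective_iff_surjective.mp heR ⟨(e a, e b), h⟩
  simp only [eR, Subtype.mk.injEq, Prod.mk.injEq] at hp
  rwa [← he hp.1, ← he hp.2]

section
variable {k : ℕ} {A : Set (Fin k → ℤ)}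

theorem cay_adj_sub_sub {x y t : Fin k → ℤ} :
    (cay A).Adj (x - t) (y - t) ↔ (cay A).Adj x y := by
  simp only [cay, sub_sub_sub_cancel_right, ne_eq, sub_left_inj]

theorem cay_adj_iff_of_neg_mem (hsym : ∀ x ∈ A, -x ∈ A) {x y : Fin k → ℤ} :
    (cay A).Adj x y ↔ x ≠ y ∧ y - x ∈ A := by
  refine and_congr_right fun _ => or_iff_left_of_imp fun h => ?_
  simpa using hsym _ h

theorem wdist_le_length {v : Fin k → ℤ} {l : List (Fin k → ℤ)} (hl : ∀ a ∈ l, a ∈ A)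
    (hv : l.sum = v) : wdist A v ≤ l.length :=
  Nat.sInf_le ⟨l, rfl, hl, hv⟩

theorem wdist_zero : wdist A 0 = 0 :=
  Nat.le_zero.mp (wdist_le_length (l := []) (by simp) rfl)

theorem exists_list_sum_eq (hsym : ∀ x ∈ A, -x ∈ A) (hgen : AddSubgroup.closure A = ⊤)
    (v : Fin k → ℤ) : ∃ l : List (Fin k → ℤ), (∀ a ∈ l, a ∈ A) ∧ l.sum = v := by
  have hA : A ∪ -A = A := Set.union_eq_left.mpr fun x hx => by simpa using hsym _ hx
  have hv : v ∈ (AddSubgroup.closure A).toAddSubmonoid := by simp [hgen]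
  rw [AddSubgroup.closure_toAddSubmonoid, hA] at hv
  exact AddSubmonoid.exists_list_of_mem_closure hv

theorem exists_length_eq_wdist (hsym : ∀ x ∈ A, -x ∈ A) (hgen : AddSubgroup.closure A = ⊤)
    (v : Fin k → ℤ) :
    ∃ l : List (Fin k → ℤ), l.length = wdist A v ∧ (∀ a ∈ l, a ∈ A) ∧ l.sum = v := by
  obtain ⟨l, hl, hv⟩ := exists_list_sum_eq hsym hgen v
  exact Nat.sInf_mem
    (s := {n | ∃ l : List (Fin k → ℤ), l.length = n ∧ (∀ a ∈ l, a ∈ A) ∧ l.sum = v})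
    ⟨l.length, l, rfl, hl, hv⟩

theorem exists_wdist_sub_lt (hsym : ∀ x ∈ A, -x ∈ A) (hgen : AddSubgroup.closure A = ⊤)
    {v : Fin k → ℤ} (hv : v ≠ 0) : ∃ a ∈ A, wdist A (v - a) < wdist A v := by
  obtain ⟨_ | ⟨a, l⟩, hlen, hA, hsum⟩ := exists_length_eq_wdist hsym hgen v
  · exact absurd hsum.symm hv
  refine ⟨a, hA a List.mem_cons_self, ?_⟩
  have : wdist A (v - a) ≤ l.length :=
    wdist_le_length (fun b hb => hA b (List.mem_cons_of_mem a hb)) (by simp [← hsum])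
  simp only [List.length_cons] at hlen
  omega

theorem wdist_le_add_one_of_adj (hsym : ∀ x ∈ A, -x ∈ A) (hgen : AddSubgroup.closure A = ⊤)
    {x y : Fin k → ℤ} (h : (cay A).Adj x y) : wdist A y ≤ wdist A x + 1 := by
  obtain ⟨l, hlen, hA, hsum⟩ := exists_length_eq_wdist hsym hgen x
  have hyx := ((cay_adj_iff_of_neg_mem hsym).mp h).2
  calc wdist A y ≤ (l.concat (y - x)).length :=
        wdist_le_length (by simpa using fun a ha => ha.elim (hA a) (· ▸ hyx)) (by simp [hsum])
    _ = wdist A x + 1 := by simp [hlen]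

theorem finite_setOf_wdist_le (hfin : A.Finite) (hsym : ∀ x ∈ A, -x ∈ A)
    (hgen : AddSubgroup.closure A = ⊤) (r : ℕ) : {x | wdist A x ≤ r}.Finite := by
  have : Finite A := hfin
  refine ((List.finite_length_le A r).image fun l => (l.map (↑)).sum).subset fun x hx => ?_
  obtain ⟨l, hlen, hA, rfl⟩ := exists_length_eq_wdist hsym hgen x
  lift l to List A using hA
  exact ⟨l, by simpa using hlen.trans_le hx, rfl⟩

variable {r : ℕ}

abbrev cayBall (A : Set (Fin k → ℤ)) (r : ℕ) : (cay A).Subgraph :=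
  (⊤ : (cay A).Subgraph).induce {x | wdist A x ≤ r}

theorem wdist_sub_le_of_hom (hsym : ∀ x ∈ A, -x ∈ A) (hgen : AddSubgroup.closure A = ⊤)
    (ψ : (cayBall A r).coe →g cay A) (h0 : (0 : Fin k → ℤ) ∈ (cayBall A r).verts)
    (u : (cayBall A r).verts) :
    wdist A (ψ u - ψ ⟨0, h0⟩) ≤ wdist A u := by
  obtain ⟨x, hx⟩ := u
  induction hn : wdist A x using Nat.strong_induction_on generalizing x with
  | _ n ih =>
  by_cases hx0 : x = 0
  · subst hx0
    simp [wdist_zero]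
  obtain ⟨a, ha, hlt⟩ := exists_wdist_sub_lt hsym hgen hx0
  have hy : x - a ∈ (cayBall A r).verts := hlt.le.trans hx
  have hxy : (cay A).Adj (x - a) x :=
    (cay_adj_iff_of_neg_mem hsym).mpr ⟨fun h => hlt.ne (by rw [h]), by simpa using ha⟩
  have hψ := ψ.map_adj (show (cayBall A r).coe.Adj ⟨x - a, hy⟩ ⟨x, hx⟩ from ⟨hy, hx, hxy⟩)
  calc wdist A (ψ ⟨x, hx⟩ - ψ ⟨0, h0⟩) ≤ wdist A (ψ ⟨x - a, hy⟩ - ψ ⟨0, h0⟩) + 1 :=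
        wdist_le_add_one_of_adj hsym hgen (cay_adj_sub_sub.mpr hψ)
    _ ≤ wdist A (x - a) + 1 := by gcongr; exact ih _ (hn ▸ hlt) _ _ rfl
    _ ≤ n := by omega

theorem cayBall_coe_adj {u w : (cayBall A r).verts} :
    (cayBall A r).coe.Adj u w ↔ (cay A).Adj u w :=
  ⟨fun h => h.2.2, fun h => ⟨u.2, w.2, h⟩⟩

theorem exists_iso_sub_of_injective (hfin : A.Finite) (hsym : ∀ x ∈ A, -x ∈ A)
    (hgen : AddSubgroup.closure A = ⊤) (ψ : (cayBall A r).coe →g cay A) (hψ : Injective ψ)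
    (h0 : (0 : Fin k → ℤ) ∈ (cayBall A r).verts) :
    ∃ χ : (cayBall A r).coe ≃g (cayBall A r).coe, ∀ u, (χ u : Fin k → ℤ) = ψ u - ψ ⟨0, h0⟩ := by
  have : Finite (cayBall A r).verts := (finite_setOf_wdist_le hfin hsym hgen r).to_subtype
  let e (u : (cayBall A r).verts) : (cayBall A r).verts :=
    ⟨ψ u - ψ ⟨0, h0⟩, (wdist_sub_le_of_hom hsym hgen ψ h0 u).trans u.2⟩
  have he : Injective e := fun u w h => hψ (sub_left_injective (congrArg Subtype.val h))
  have hadj (u w) (h : (cayBall A r).coe.Adj u w) : (cayBall A r).coe.Adj (e u) (e w) :=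
    cayBall_coe_adj.mpr (cay_adj_sub_sub.mpr (ψ.map_adj h))
  exact ⟨⟨Equiv.ofBijective e (Finite.injective_iff_bijective.mp he),
    ⟨he.rel_of_rel_apply hadj, hadj _ _⟩⟩, fun _ => rfl⟩

end

theorem SimpleGraph.Subgraph.eq_translate_of_iso {V : Type*} [AddGroup V] {G : SimpleGraph V}
    {B L : G.Subgraph} (θ : B.coe ≃g L.coe) (t : V) (hθ : ∀ u, (θ u : V) = u + t) :
    L.verts = (· + t) '' B.verts ∧ ∀ x y, L.Adj x y ↔ B.Adj (x - t) (y - t) := by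
  have hθsymm (v : L.verts) : (θ.symm v : V) = v - t := by
    rw [eq_sub_iff_add_eq, ← hθ, θ.apply_symm_apply]
  refine ⟨Set.ext fun v => ⟨fun hv => ⟨_, (θ.symm ⟨v, hv⟩).2, ?_⟩, ?_⟩,
    fun x y => ⟨fun h => ?_, fun h => ?_⟩⟩
  · simp [hθsymm]
  · rintro ⟨u, hu, rfl⟩
    simpa [hθ] using (θ ⟨u, hu⟩).2
  · have hL : L.coe.Adj ⟨x, L.edge_vert h⟩ ⟨y, L.edge_vert h.symm⟩ := h
    simpa [hθsymm] using θ.symm.map_adj_iff.mpr hL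
  · have hB : B.coe.Adj ⟨x - t, B.edge_vert h⟩ ⟨y - t, B.edge_vert h.symm⟩ := h
    simpa [hθ] using θ.map_adj_iff.mpr hB

theorem stmt5_general {k : ℕ} (A : Set (Fin k → ℤ)) (hfin : A.Finite)
    (hsym : ∀ x ∈ A, -x ∈ A)
    (hgen : AddSubgroup.closure A = ⊤) (r : ℕ)
    -- the ball of radius r, as the induced subgraph of Γ on {x | ρ(x) ≤ r}
    (B : (cay A).Subgraph)
    (hB : B = (⊤ : (cay A).Subgraph).induce {x | wdist A x ≤ r})
    (lam : (cay A).Subgraph)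
    (φ : B.coe ≃g lam.coe)
    (h0 : (0 : Fin k → ℤ) ∈ B.verts) :
    lam.verts = (fun x => x + (φ ⟨0, h0⟩ : Fin k → ℤ)) '' B.verts ∧
      ∀ x y : Fin k → ℤ, lam.Adj x y ↔
        B.Adj (x - (φ ⟨0, h0⟩ : Fin k → ℤ)) (y - (φ ⟨0, h0⟩ : Fin k → ℤ)) := by
  subst hB
  obtain ⟨χ, hχ⟩ := exists_iso_sub_of_injective hfin hsym hgen (lam.hom.comp φ.toHom)
    (Subtype.val_injective.comp φ.injective) h0
  refine SimpleGraph.Subgraph.eq_translate_of_iso (χ.symm.trans φ) _ fun u => ?_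
  simpa [sub_eq_iff_eq_add] using (hχ (χ.symm u)).symm

theorem stmt5 {k : ℕ} (A : Set (Fin k → ℤ)) (hfin : A.Finite)
    (hsym : ∀ x ∈ A, -x ∈ A) (h0A : (0 : Fin k → ℤ) ∉ A)
    (hgen : AddSubgroup.closure A = ⊤) (r : ℕ)
    -- the ball of radius r, as the induced subgraph of Γ on {x | ρ(x) ≤ r}
    (B : (cay A).Subgraph)
    (hB : B = (⊤ : (cay A).Subgraph).induce {x | wdist A x ≤ r})
    (lam : (cay A).Subgraph)
    (φ : B.coe ≃g lam.coe)
    (h0 : (0 : Fin k → ℤ) ∈ B.verts) :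
    lam.verts = (fun x => x + (φ ⟨0, h0⟩ : Fin k → ℤ)) '' B.verts ∧
      ∀ x y : Fin k → ℤ, lam.Adj x y ↔
        B.Adj (x - (φ ⟨0, h0⟩ : Fin k → ℤ)) (y - (φ ⟨0, h0⟩ : Fin k → ℤ)) :=
  stmt5_general A hfin hsym hgen r B hB lam φ h0
end

section
/- Let A be a finite symmetric generating set of ℤ^k not containing 0, and view elements of A as vectors in ℝ^k. Call x ∈ A primary if for every integer t ≥ 0 the word-metric distance ρ(tx) equals t and tx has a unique shortest representation (the unique shortest path from 0 to tx in Cay(ℤ^k, A) consists of t steps by x). Then x ∈ A is primary if and only if x is a vertex (extreme point) of the convex hull of A in ℝ^k. -/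
/-- `x` is primary: for every `t ≥ 0`, `ρ(tx) = t` and the only representation of
`tx` as a sum of `t` elements of `A` consists of `t` copies of `x` (so the shortest
path from `0` to `tx` is unique). -/
def IsPrimary {k : ℕ} (A : Set (Fin k → ℤ)) (x : Fin k → ℤ) : Prop :=
  ∀ t : ℕ, wdist A (t • x) = t ∧
    ∀ l : List (Fin k → ℤ), (∀ a ∈ l, a ∈ A) → l.length = t → l.sum = t • x →
      l = List.replicate t x

/-- `x` is a vertex (extreme point) of `Conv A`, viewed in `ℝ^k`: some linear
functional is strictly larger at `x` than at every other point of `A`. -/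
def IsHullVertex {k : ℕ} (A : Set (Fin k → ℤ)) (x : Fin k → ℤ) : Prop :=
  ∃ l : (Fin k → ℝ) →ₗ[ℝ] ℝ, ∀ y ∈ A, y ≠ x →
    l (fun i => (y i : ℝ)) < l (fun i => (x i : ℝ))


/-!
If a functional `l` exposes `x` as a vertex, then `l a ≤ l x` on `A` with equality only at
`a = x`, and `l x > 0` because `l (-x) < l x`. Applying `l` to a sum of `n` letters equal to
`t • x` gives `t • l x ≤ n • l x`, so `n ≥ t`, and `n = t` forces every letter to be `x`.

Conversely, if `x` is not a vertex it lies in the convex hull of `A \ {x}` (Hahn–Banach), so by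
Carathéodory `x = ∑ wᵢ uᵢ` with `wᵢ > 0` and the `uᵢ` affinely independent. The integer vectors
`uᵢ - x` are then linearly dependent over `ℝ`, hence over `ℤ`, and affine independence forces
every relation `∑ cᵢ (uᵢ - x) = 0` to be proportional to `w`. An integer relation of the right
sign writes `q • x`, `q = ∑ cᵢ`, as a sum of `q` letters that are not all `x`.
-/

open Finset

section StrictMax

variable {M N : Type*} [AddCommMonoid M] [AddCommMonoid N] [LinearOrder N]
  [IsOrderedCancelAddMonoid N] {A : Set M} {x : M} {f : M →+ N} {L : List M} {t : ℕ}

theorem List.le_length_of_sum_eq_nsmul (hfx : 0 < f x) (hmax : ∀ y ∈ A, f y ≤ f x)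
    (hL : ∀ a ∈ L, a ∈ A) (hsum : L.sum = t • x) : t ≤ L.length := by
  have hle : (L.map f).sum ≤ L.length • f x := by
    simpa using List.sum_le_card_nsmul (L.map f) (f x) (by simpa using fun a ha => hmax a (hL a ha))
  rwa [← map_list_sum, hsum, map_nsmul, nsmul_le_nsmul_iff_left hfx] at hle

theorem List.eq_replicate_of_sum_eq_nsmul (hmax : ∀ y ∈ A, y ≠ x → f y < f x)
    (hL : ∀ a ∈ L, a ∈ A) (hlen : L.length = t) (hsum : L.sum = t • x) :
    L = List.replicate t x := by
  refine List.eq_replicate_iff.2 ⟨hlen, fun a ha => ?_⟩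
  by_contra hax
  have hlt := List.sum_lt_sum f (fun _ => f x)
    (fun b hb => (eq_or_ne b x).elim (fun h => h ▸ le_rfl) fun h => (hmax b (hL b hb) h).le)
    ⟨a, ha, hmax a (hL a ha) hax⟩
  rw [← map_list_sum, hsum, List.map_const', List.sum_replicate, hlen, map_nsmul] at hlt
  exact lt_irrefl _ hlt

end StrictMax

theorem wdist_eq_of_forall_le_length {k : ℕ} {A : Set (Fin k → ℤ)} {v : Fin k → ℤ} {n : ℕ}
    {l : List (Fin k → ℤ)} (hl : ∀ a ∈ l, a ∈ A) (hlen : l.length = n) (hsum : l.sum = v)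
    (hmin : ∀ l' : List (Fin k → ℤ), (∀ a ∈ l', a ∈ A) → l'.sum = v → n ≤ l'.length) :
    wdist A v = n :=
  le_antisymm (Nat.sInf_le ⟨l, hlen, hl, hsum⟩)
    (le_csInf ⟨n, l, hlen, hl, hsum⟩ fun _ ⟨l', hlen', hl', hsum'⟩ => hlen' ▸ hmin l' hl' hsum')

theorem isPrimary_of_isHullVertex {k : ℕ} {A : Set (Fin k → ℤ)} (hsym : ∀ x ∈ A, -x ∈ A)
    (h0A : (0 : Fin k → ℤ) ∉ A) {x : Fin k → ℤ} (hx : x ∈ A) (hv : IsHullVertex A x) :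
    IsPrimary A x := by
  obtain ⟨l, hl⟩ := hv
  let f : (Fin k → ℤ) →+ ℝ := l.toAddMonoidHom.comp (AddMonoidHom.compLeft (Int.castAddHom ℝ) _)
  have hmax : ∀ y ∈ A, y ≠ x → f y < f x := hl
  have hmax' : ∀ y ∈ A, f y ≤ f x := fun y hy =>
    (eq_or_ne y x).elim (fun h => h ▸ le_rfl) fun h => (hmax y hy h).le
  have hfx : 0 < f x := by
    have := hmax (-x) (hsym x hx) (neg_ne_self.2 fun h => h0A (h ▸ hx))
    rw [map_neg] at this
    linarith
  intro t
  have hrep : ∀ a ∈ List.replicate t x, a ∈ A := fun a ha => List.eq_of_mem_replicate ha ▸ hx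
  exact ⟨wdist_eq_of_forall_le_length hrep List.length_replicate (List.sum_replicate t x)
      fun _ hl' hsum => List.le_length_of_sum_eq_nsmul hfx hmax' hl' hsum,
    fun _ hl' hlen hsum => List.eq_replicate_of_sum_eq_nsmul hmax hl' hlen hsum⟩

theorem AffineIndependent.eq_sum_mul_of_sum_smul_sub_eq_zero {k V ι : Type*} [Ring k]
    [AddCommGroup V] [Module k V] [Fintype ι] {p : ι → V} (hp : AffineIndependent k p)
    {w c : ι → k} {x : V} (hw : ∑ i, w i = 1) (hx : ∑ i, w i • p i = x)
    (hc : ∑ i, c i • (p i - x) = 0) (i : ι) : c i = (∑ j, c j) * w i := by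
  refine hp.eq_of_sum_eq_sum (s := univ) (w₂ := fun i => (∑ j, c j) * w i) ?_ ?_ i
    (mem_univ i)
  · rw [← mul_sum, hw, mul_one]
  · simp only [smul_sub, sum_sub_distrib, ← sum_smul, sub_eq_zero] at hc
    simp only [mul_smul, ← smul_sum, hx, hc]

theorem exists_int_sum_smul_eq_zero_of_real {ι ι' : Type*} [Fintype ι] [Finite ι']
    {v : ι → ι' → ℤ} {w : ι → ℝ} (hw : ∑ i, w i • (fun j => (v i j : ℝ)) = 0) {i : ι}
    (hwi : w i ≠ 0) : ∃ g : ι → ℤ, ∑ i, g i • v i = 0 ∧ ∃ i, g i ≠ 0 := by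
  refine Fintype.not_linearIndependent_iff.1 ?_
  rw [← linearIndependent_algebraMap_comp_iff (S := ℝ)]
  exact Fintype.not_linearIndependent_iff.2 ⟨w, hw, i, hwi⟩

theorem exists_pos_nat_sum_nsmul_eq {ι ι' : Type*} [Fintype ι] [Finite ι'] {u : ι → ι' → ℤ}
    {x : ι' → ℤ} {w : ι → ℝ} (hu : AffineIndependent ℝ fun i j => (u i j : ℝ))
    (hw : ∀ i, 0 < w i) (hw1 : ∑ i, w i = 1)
    (hx : ∑ i, w i • (fun j => (u i j : ℝ)) = fun j => (x j : ℝ)) :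
    ∃ c : ι → ℕ, (∀ i, 0 < c i) ∧ ∑ i, c i • u i = (∑ i, c i) • x := by
  have hdep : ∑ i, w i • (fun j => ((u i - x) j : ℝ)) = 0 := by
    ext j
    have := congrFun hx j
    simp only [Finset.sum_apply, Pi.smul_apply, smul_eq_mul] at this
    simp [mul_sub, sum_sub_distrib, this, ← sum_mul, hw1]
  obtain ⟨i₀, -, hi₀⟩ := exists_ne_zero_of_sum_ne_zero (hw1 ▸ one_ne_zero : ∑ i, w i ≠ 0)
  obtain ⟨g, hg, i₁, hi₁⟩ := exists_int_sum_smul_eq_zero_of_real hdep hi₀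
  have hgw : ∀ i, (g i : ℝ) = (∑ j, (g j : ℝ)) * w i := by
    refine hu.eq_sum_mul_of_sum_smul_sub_eq_zero hw1 hx ?_
    ext j
    simpa [Finset.sum_apply] using congrArg (fun v : ι' → ℤ => (v j : ℝ)) hg
  have hs : ∑ j, (g j : ℝ) ≠ 0 := fun hs => hi₁ (by
    have := hgw i₁
    rwa [hs, zero_mul, Int.cast_eq_zero] at this)
  obtain ⟨c, hc, hcx⟩ : ∃ c : ι → ℤ, (∀ i, 0 < c i) ∧ ∑ i, c i • (u i - x) = 0 := by
    rcases hs.lt_or_gt with hneg | hpos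
    · refine ⟨-g, fun i => ?_, ?_⟩
      · have := hgw i ▸ mul_neg_of_neg_of_pos hneg (hw i)
        simp only [Pi.neg_apply]
        exact_mod_cast neg_pos.2 this
      · simp only [Pi.neg_apply, neg_smul, sum_neg_distrib, hg, neg_zero]
    · exact ⟨g, fun i => by exact_mod_cast hgw i ▸ mul_pos hpos (hw i), hg⟩
  lift c to ι → ℕ using fun i => (hc i).le
  refine ⟨c, fun i => by simpa using hc i, ?_⟩
  simpa only [smul_sub, sum_sub_distrib, ← sum_smul, sub_eq_zero, natCast_zsmul] using hcx

theorem mem_convexHull_of_not_isHullVertex {k : ℕ} {A : Set (Fin k → ℤ)} (hfin : A.Finite)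
    {x : Fin k → ℤ} (hnv : ¬IsHullVertex A x) :
    (fun i => (x i : ℝ)) ∈
      convexHull ℝ ((fun v : Fin k → ℤ => fun i => (v i : ℝ)) '' (A \ {x})) := by
  by_contra hnot
  obtain ⟨f, u, hfu, hux⟩ := geometric_hahn_banach_closed_point (convex_convexHull ℝ _)
    (((hfin.subset Set.sdiff_subset).image _).isCompact_convexHull (𝕜 := ℝ)).isClosed hnot
  exact hnv ⟨f.toLinearMap, fun y hy hne =>
    (hfu _ (subset_convexHull ℝ _ ⟨y, ⟨hy, hne⟩, rfl⟩)).trans hux⟩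

theorem not_isPrimary_of_sum_nsmul_eq {k : ℕ} {A : Set (Fin k → ℤ)} {x : Fin k → ℤ} {ι : Type*}
    [Fintype ι] {u : ι → Fin k → ℤ} (hu : ∀ i, u i ∈ A) {c : ι → ℕ}
    (hc : ∑ i, c i • u i = (∑ i, c i) • x) {i : ι} (hci : 0 < c i) (hui : u i ≠ x) :
    ¬IsPrimary A x := by
  intro hp
  let s : Multiset (Fin k → ℤ) := ∑ j, Multiset.replicate (c j) (u j)
  have hs : ∀ a ∈ s.toList, a ∈ A := by
    intro a ha
    obtain ⟨j, -, haj⟩ := Multiset.mem_sum.1 (Multiset.mem_toList.1 ha)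
    exact Multiset.eq_of_mem_replicate haj ▸ hu j
  have hrep := (hp (∑ j, c j)).2 s.toList hs (by simp [s, Multiset.card_sum])
    (by simpa only [s, Multiset.sum_toList, Multiset.sum_sum, Multiset.sum_replicate] using hc)
  have hui_mem : u i ∈ s.toList := Multiset.mem_toList.2 <|
    Multiset.mem_sum.2 ⟨i, mem_univ i, Multiset.mem_replicate.2 ⟨hci.ne', rfl⟩⟩
  exact hui (List.eq_of_mem_replicate (hrep ▸ hui_mem))

theorem isHullVertex_of_isPrimary {k : ℕ} {A : Set (Fin k → ℤ)} (hfin : A.Finite)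
    {x : Fin k → ℤ} (hp : IsPrimary A x) : IsHullVertex A x := by
  by_contra hnv
  obtain ⟨ι, _, z, w, hzA, hz, hw, hw1, hwz⟩ :=
    eq_pos_convex_span_of_mem_convexHull (mem_convexHull_of_not_isHullVertex hfin hnv)
  choose u hu hzu using fun i => hzA ⟨i, rfl⟩
  obtain rfl : (fun i j => (u i j : ℝ)) = z := funext hzu
  obtain ⟨c, hc, hcx⟩ := exists_pos_nat_sum_nsmul_eq hz hw hw1 hwz
  obtain ⟨i, -, -⟩ := exists_ne_zero_of_sum_ne_zero (hw1 ▸ one_ne_zero : ∑ i, w i ≠ 0)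
  exact not_isPrimary_of_sum_nsmul_eq (fun i => (hu i).1) hcx (hc i) (hu i).2 hp

theorem stmt7_general {k : ℕ} (A : Set (Fin k → ℤ)) (hfin : A.Finite)
    (hsym : ∀ x ∈ A, -x ∈ A) (h0A : (0 : Fin k → ℤ) ∉ A)
    (x : Fin k → ℤ) (hx : x ∈ A) :
    IsPrimary A x ↔ IsHullVertex A x :=
  ⟨isHullVertex_of_isPrimary hfin, isPrimary_of_isHullVertex hsym h0A hx⟩

theorem stmt7 {k : ℕ} (A : Set (Fin k → ℤ)) (hfin : A.Finite)
    (hsym : ∀ x ∈ A, -x ∈ A) (h0A : (0 : Fin k → ℤ) ∉ A)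
    (hgen : AddSubgroup.closure A = ⊤) (x : Fin k → ℤ) (hx : x ∈ A) :
    IsPrimary A x ↔ IsHullVertex A x :=
  stmt7_general A hfin hsym h0A x hx
end

section
/- Let A be a finite symmetric generating set of ℤ^k not containing 0. For every x ∈ A there exists a positive integer K_x such that K_x·x can be written as a sum of at most K_x primary elements of A (with repetitions allowed), where primary elements are the vertices of Conv A. -/
section Polytope

variable {E : Type*} [AddCommGroup E] [Module ℝ E] [TopologicalSpace E] [T2Space E]
  [IsTopologicalAddGroup E] [ContinuousSMul ℝ E] [LocallyConvexSpace ℝ E] {s : Set E}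

theorem Set.Finite.convexHull_extremePoints_convexHull (hs : s.Finite) :
    convexHull ℝ ((convexHull ℝ s).extremePoints ℝ) = convexHull ℝ s := by
  have hext : ((convexHull ℝ s).extremePoints ℝ).Finite := hs.subset extremePoints_convexHull_subset
  rw [← (hext.isClosed_convexHull ℝ).closure_eq]
  exact closure_convexHull_extremePoints (hs.isCompact_convexHull ℝ) (convex_convexHull ℝ s)

theorem Set.Finite.exists_forall_lt_of_mem_extremePoints (hs : s.Finite) {x : E}
    (hx : x ∈ (convexHull ℝ s).extremePoints ℝ) :
    ∃ f : StrongDual ℝ E, ∀ y ∈ s, y ≠ x → f y < f x := by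
  have hx' : x ∉ convexHull ℝ (s \ {x}) := fun h ↦
    ((convex_convexHull ℝ s).mem_extremePoints_iff_mem_sdiff_convexHull_sdiff.1 hx).2
      (convexHull_mono (Set.sdiff_subset_sdiff_left (subset_convexHull ℝ s)) h)
  obtain ⟨f, u, hlt, hu⟩ := geometric_hahn_banach_closed_point (convex_convexHull ℝ _)
    ((hs.sdiff (t := {x})).isClosed_convexHull ℝ) hx'
  exact ⟨f, fun y hy hyx ↦ (hlt y (subset_convexHull ℝ _ ⟨hy, hyx⟩)).trans hu⟩

end Polytope

section Rationality

variable {R S : Type*} [CommRing R] [CommRing S] [IsDomain S] [Algebra R S] [FaithfulSMul R S]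
  {κ ι : Type*} [Fintype κ] [Finite ι]

theorem LinearIndependent.exists_algebraMap_eq_mul_of_sum_smul_eq {v : κ → ι → R} {b : ι → R}
    {w : κ → S} (hv : LinearIndependent S (fun i ↦ algebraMap R S ∘ v i))
    (hw : ∑ i, w i • (algebraMap R S ∘ v i) = algebraMap R S ∘ b) :
    ∃ N : R, N ≠ 0 ∧ ∃ n : κ → R, ∀ i, algebraMap R S (n i) = algebraMap R S N * w i := by
  let u : Option κ → ι → R := fun o ↦ o.elim b v
  have hdep : ¬ LinearIndependent S (fun o ↦ algebraMap R S ∘ u o) := by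
    rw [Fintype.not_linearIndependent_iff]
    refine ⟨fun o ↦ o.elim (-1) w, ?_, none, by simp⟩
    simp [Fintype.sum_option, u, hw]
  rw [linearIndependent_algebraMap_comp_iff, Fintype.not_linearIndependent_iff] at hdep
  obtain ⟨g, hg, o, ho⟩ := hdep
  have hcomb : ∑ i, (algebraMap R S (g (some i)) + algebraMap R S (g none) * w i) •
      (algebraMap R S ∘ v i) = 0 := by
    ext t
    have hgt := congr(algebraMap R S ($hg t))
    have hwt := congrFun hw t
    simp only [Finset.sum_apply, Pi.smul_apply, smul_eq_mul, Fintype.sum_option, Option.elim_none,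
      Option.elim_some, map_add, map_mul, map_sum, Pi.zero_apply, map_zero, Function.comp_apply, u]
      at hgt hwt
    simp only [add_smul, Finset.sum_add_distrib, Pi.add_apply, Finset.sum_apply, Pi.smul_apply,
      Pi.zero_apply, Function.comp_apply, smul_eq_mul, mul_assoc, ← Finset.mul_sum, hwt]
    linear_combination hgt
  have hrel (i : κ) : algebraMap R S (g (some i)) = -algebraMap R S (g none) * w i := by
    linear_combination Fintype.linearIndependent_iff.1 hv _ hcomb i
  refine ⟨-g none, fun h ↦ ho ?_, g ∘ some, fun i ↦ by simpa using hrel i⟩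
  have hnone : g none = 0 := neg_eq_zero.1 h
  cases o with
  | none => exact hnone
  | some i => exact FaithfulSMul.algebraMap_injective R S (by simp [hrel, hnone])

theorem AffineIndependent.exists_algebraMap_eq_mul_of_sum_smul_eq {p : κ → ι → R} {x : ι → R}
    {w : κ → S} (hp : AffineIndependent S (fun i ↦ algebraMap R S ∘ p i)) (hw₁ : ∑ i, w i = 1)
    (hw : ∑ i, w i • (algebraMap R S ∘ p i) = algebraMap R S ∘ x) :
    ∃ N : R, N ≠ 0 ∧ ∃ n : κ → R, ∀ i, algebraMap R S (n i) = algebraMap R S N * w i := by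
  have hlin : LinearIndependent S (fun i ↦ algebraMap R S ∘ fun o : Option ι ↦ o.elim 1 (p i)) := by
    rw [Fintype.linearIndependent_iff]
    intro g hg
    have h0 := congrFun hg none
    have h1 : ∑ i, g i • (algebraMap R S ∘ p i) = 0 :=
      funext fun t ↦ by simpa using congrFun hg (some t)
    exact fun i ↦ hp.eq_zero_of_sum_eq_zero (by simpa using h0) h1 i (Finset.mem_univ i)
  apply hlin.exists_algebraMap_eq_mul_of_sum_smul_eq (b := fun o ↦ o.elim 1 x)
  ext (_ | t)
  · simp [hw₁]
  · simpa using congrFun hw t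

end Rationality

theorem exists_list_sum_eq_sum_nsmul {M κ : Type*} [AddCommMonoid M] [Fintype κ] (m : κ → ℕ)
    (a : κ → M) :
    ∃ l : List M, (∀ v ∈ l, v ∈ Set.range a) ∧ l.length = ∑ i, m i ∧ l.sum = ∑ i, m i • a i :=
  ⟨(∑ i, Multiset.replicate (m i) (a i)).toList, by
    simpa [Multiset.mem_sum] using fun v i hv ↦ ⟨i, (Multiset.eq_of_mem_replicate hv).symm⟩,
    by simp [Multiset.card_sum], by simp [Multiset.sum_sum]⟩

theorem exists_list_sum_eq_nsmul_of_mem_convexHull {ι : Type*} [Finite ι] {E : Set (ι → ℤ)}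
    {x : ι → ℤ} (hx : (fun t ↦ (x t : ℝ)) ∈ convexHull ℝ ((fun a t ↦ (a t : ℝ)) '' E)) :
    ∃ K : ℕ, 0 < K ∧ ∃ l : List (ι → ℤ), (∀ a ∈ l, a ∈ E) ∧ l.length = K ∧ l.sum = K • x := by
  obtain ⟨κ, _, z, w, hz, hz_ind, hw₀, hw₁, hwz⟩ := eq_pos_convex_span_of_mem_convexHull hx
  choose a haE hza using fun i ↦ hz (Set.mem_range_self i)
  obtain rfl : z = fun i t ↦ (a i t : ℝ) := funext fun i ↦ (hza i).symm
  obtain ⟨N, hN, n, hn⟩ :=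
    AffineIndependent.exists_algebraMap_eq_mul_of_sum_smul_eq (R := ℤ) hz_ind hw₁ hwz
  simp only [algebraMap_int_eq, Int.coe_castRingHom] at hn
  have habs (i : κ) : |(n i : ℝ)| = |(N : ℝ)| * w i := by
    rw [hn i, abs_mul, abs_of_pos (hw₀ i)]
  obtain ⟨l, hla, hlen, hsum⟩ := exists_list_sum_eq_sum_nsmul (fun i ↦ (n i).natAbs) a
  refine ⟨N.natAbs, Int.natAbs_pos.2 hN, l, ?_, ?_, ?_⟩
  · intro b hb
    obtain ⟨i, rfl⟩ := hla b hb
    exact haE i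
  · rw [hlen]
    have : ∑ i, ((n i).natAbs : ℝ) = N.natAbs := by simp [habs, ← Finset.mul_sum, hw₁]
    exact_mod_cast this
  · rw [hsum]
    ext t
    apply Int.cast_injective (α := ℝ)
    have := congrFun hwz t
    simp only [Finset.sum_apply, Pi.smul_apply, smul_eq_mul] at this
    simp [habs, mul_assoc, ← Finset.mul_sum, this]

theorem isHullVertex_of_mem_extremePoints {k : ℕ} {A : Set (Fin k → ℤ)} (hA : A.Finite)
    {a : Fin k → ℤ}
    (ha : (fun i ↦ (a i : ℝ)) ∈ (convexHull ℝ ((fun y i ↦ (y i : ℝ)) '' A)).extremePoints ℝ) :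
    IsHullVertex A a := by
  obtain ⟨f, hf⟩ := (hA.image _).exists_forall_lt_of_mem_extremePoints ha
  refine ⟨f.toLinearMap, fun y hy hya ↦ hf _ (Set.mem_image_of_mem _ hy) fun h ↦ hya ?_⟩
  exact funext fun i ↦ by exact_mod_cast congrFun h i

theorem stmt10_general {k : ℕ} (A : Set (Fin k → ℤ)) (hfin : A.Finite) :
    ∀ x ∈ A, ∃ K : ℕ, 0 < K ∧
      ∃ l : List (Fin k → ℤ),
        (∀ a ∈ l, a ∈ A ∧ IsHullVertex A a) ∧
        l.length ≤ K ∧ l.sum = K • x := by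
  intro x hx
  set c : (Fin k → ℤ) → Fin k → ℝ := fun a i ↦ (a i : ℝ)
  have hext : (convexHull ℝ (c '' A)).extremePoints ℝ ⊆ c '' {a | a ∈ A ∧ IsHullVertex A a} := by
    intro e he
    obtain ⟨a, ha, rfl⟩ := extremePoints_convexHull_subset he
    exact ⟨a, ⟨ha, isHullVertex_of_mem_extremePoints hfin he⟩, rfl⟩
  have hx_hull : c x ∈ convexHull ℝ (c '' {a | a ∈ A ∧ IsHullVertex A a}) := by
    refine convexHull_mono hext ?_
    rw [(hfin.image c).convexHull_extremePoints_convexHull]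
    exact subset_convexHull ℝ _ (Set.mem_image_of_mem c hx)
  obtain ⟨K, hK, l, hl, hlen, hsum⟩ := exists_list_sum_eq_nsmul_of_mem_convexHull hx_hull
  exact ⟨K, hK, l, hl, hlen.le, hsum⟩

theorem stmt10 {k : ℕ} (A : Set (Fin k → ℤ)) (hfin : A.Finite)
    (hsym : ∀ x ∈ A, -x ∈ A) (h0A : (0 : Fin k → ℤ) ∉ A)
    (hgen : AddSubgroup.closure A = ⊤) :
    ∀ x ∈ A, ∃ K : ℕ, 0 < K ∧
      ∃ l : List (Fin k → ℤ),
        (∀ a ∈ l, a ∈ A ∧ IsHullVertex A a) ∧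
        l.length ≤ K ∧ l.sum = K • x :=
  stmt10_general A hfin
end
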